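/- arXiv:2003.07486 — 3 statements merged into one kernel-verified Lean document; each statement's English description precedes it below -/
import Mathlib

section
/- Fix a constant C > 0. Then there exist c₀ > 0 and δ₀ > 0 such that for every profile function f with parameters c < c₀ and δ < δ₀ and arbitrary slope K > 0, the matching function F satisfies: |F(1−α) − f(1−α)| < C, |F(s+α) − f(s+α)| < C, and |F(g(r)) − f(r)| < C for all r ∈ [1−ε, 1] ∪ [1+ε, 1+2ε]. In particular these bounds are uniform in K. -/
open Set

set_option maxHeartbeats 1000000
noncomputable section

/-- `s̃ = (s+ε)/(1+ε)`, so that `ε = s̃(1+ε) − s`. -/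
def stilde (s ε : ℝ) : ℝ := (s + ε) / (1 + ε)

/-- A profile function with parameters `c, δ, K`: a `C^∞` function on `[1−α, s+α]` which is
linear of slope `c` on `[1−α, 1−ε]`, monotone increasing with total increase `δ` on `[1−ε, 1]`,
vanishes at `1`, linear of slope `K` on `[1, 1+ε]`, monotone increasing with total increase `δ`
on `[1+ε, 1+2ε]`, and linear of slope `c` on `[1+2ε, s+α]`. -/
structure ProfileFun (s α ε c δ K : ℝ) where
  f : ℝ → ℝ
  b : ℝ
  cK : ℝ
  B : ℝ
  smooth : ContDiffOn ℝ (⊤ : ℕ∞) f (Icc (1 - α) (s + α))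
  seg1 : ∀ r ∈ Icc (1 - α) (1 - ε), f r = c * r + b
  mono1 : MonotoneOn f (Icc (1 - ε) 1)
  inc1 : f 1 - f (1 - ε) = δ
  f_one : f 1 = 0
  seg2 : ∀ r ∈ Icc (1 : ℝ) (1 + ε), f r = K * r + cK
  mono2 : MonotoneOn f (Icc (1 + ε) (1 + 2 * ε))
  inc2 : f (1 + 2 * ε) - f (1 + ε) = δ
  seg3 : ∀ r ∈ Icc (1 + 2 * ε) (s + α), f r = c * r + B

/-- The function `F` matching a profile function `f`, normalized by `F(s) = 0`:
`F = c·r + b̃` on `[1−α, s(1−ε)]`, `F(r) = s·f(r/s)` on `[s(1−ε), s]`, `F = K·r + c̃_K` on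
`[s, s̃(1+ε)]`, `F(r) = s̃·f(r/s̃) + d̃` on `[s̃(1+ε), s̃(1+2ε)]`, and `F = c·r + B̃` on
`[s̃(1+2ε), s+α]`. -/
structure MatchingFun (s α ε c K : ℝ) (f : ℝ → ℝ) where
  F : ℝ → ℝ
  bt : ℝ
  ctK : ℝ
  dt : ℝ
  Bt : ℝ
  seg1 : ∀ r ∈ Icc (1 - α) (s * (1 - ε)), F r = c * r + bt
  seg2 : ∀ r ∈ Icc (s * (1 - ε)) s, F r = s * f (r / s)
  seg3 : ∀ r ∈ Icc s (stilde s ε * (1 + ε)), F r = K * r + ctK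
  seg4 : ∀ r ∈ Icc (stilde s ε * (1 + ε)) (stilde s ε * (1 + 2 * ε)),
    F r = stilde s ε * f (r / stilde s ε) + dt
  seg5 : ∀ r ∈ Icc (stilde s ε * (1 + 2 * ε)) (s + α), F r = c * r + Bt
  F_s : F s = 0

/-- The monotone diffeomorphism `g` of `[1−α, s+α]` with `g(r) = s·r` on `[1−ε, 1]` and
`g(r) = s̃·r` on `[1+ε, 1+2ε]`, fixing the endpoints. -/
structure NeckMap (s α ε : ℝ) where
  g : ℝ → ℝ
  strictMono : StrictMonoOn g (Icc (1 - α) (s + α))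
  bijOn : BijOn g (Icc (1 - α) (s + α)) (Icc (1 - α) (s + α))
  smooth : ContDiffOn ℝ (⊤ : ℕ∞) g (Icc (1 - α) (s + α))
  seg1 : ∀ r ∈ Icc (1 - ε) (1 : ℝ), g r = s * r
  seg2 : ∀ r ∈ Icc (1 + ε) (1 + 2 * ε), g r = stilde s ε * r

/-- STATEMENT 10: fix a constant `C > 0`. Then there exist `c₀ > 0` and `δ₀ > 0` such that for
every profile function `f` with parameters `c < c₀`, `δ < δ₀` and arbitrary slope `K > 0`, the
matching function `F` satisfies `|F(1−α) − f(1−α)| < C`, `|F(s+α) − f(s+α)| < C`, and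
`|F(g(r)) − f(r)| < C` for all `r ∈ [1−ε, 1] ∪ [1+ε, 1+2ε]`; in particular the bounds are
uniform in `K`. -/
theorem statement10 (s α ε : ℝ) (hs : 1 < s) (hα : 0 < α) (hε : 0 < ε)
    (hεm : ε < min α s) (G : NeckMap s α ε) (C : ℝ) (hC : 0 < C) :
    ∃ c₀ > (0 : ℝ), ∃ δ₀ > (0 : ℝ), ∀ c δ K : ℝ,
      0 < c → c < c₀ → 0 < δ → δ < δ₀ → 0 < K →
      ∀ (P : ProfileFun s α ε c δ K) (Q : MatchingFun s α ε c K P.f),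
        |Q.F (1 - α) - P.f (1 - α)| < C ∧
        |Q.F (s + α) - P.f (s + α)| < C ∧
        ∀ r ∈ Icc (1 - ε) (1 : ℝ) ∪ Icc (1 + ε) (1 + 2 * ε),
          |Q.F (G.g r) - P.f r| < C := by
  have hεα : ε < α := lt_of_lt_of_le hεm (min_le_left _ _)
  have hεs : ε < s := lt_of_lt_of_le hεm (min_le_right _ _)
  have hs0 : (0 : ℝ) < s := by linarith
  have hsne : s ≠ 0 := ne_of_gt hs0
  have h1εne : (1 : ℝ) + ε ≠ 0 := by positivity
  set t := stilde s ε with hT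
  have htmul : t * (1 + ε) = s + ε := by
    rw [hT, stilde, div_mul_cancel₀ _ h1εne]
  have ht1 : 1 < t := by
    rw [hT, stilde, lt_div_iff₀ (by positivity : (0:ℝ) < 1 + ε)]; linarith
  have ht0 : (0 : ℝ) < t := by linarith
  have htne : t ≠ 0 := ne_of_gt ht0
  have hts : t < s := by
    rw [hT, stilde, div_lt_iff₀ (by positivity : (0:ℝ) < 1 + ε)]
    linarith [mul_lt_mul_of_pos_left hs hε]
  clear_value t
  -- Interval orderings forced by the NeckMap
  have h1 : 1 - α ≤ s * (1 - ε) := by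
    have hdom : (1 - ε) ∈ Icc (1 - α) (s + α) := ⟨by linarith, by linarith⟩
    have hmap := G.bijOn.mapsTo hdom
    have hg := G.seg1 (1 - ε) ⟨le_rfl, by linarith⟩
    rw [hg] at hmap
    exact hmap.1
  have h2 : 1 + 2 * ε ≤ s + α := by
    by_contra h
    push_neg at h
    have hg := G.seg2 (s + α) ⟨by linarith, le_of_lt h⟩
    have hmap := G.bijOn.mapsTo ⟨by linarith, le_rfl⟩
    rw [hg, ← hT] at hmap
    have h5 := hmap.2
    have h6 := mul_lt_mul_of_pos_right ht1 (show (0:ℝ) < s + α by linarith)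
    linarith
  have h3 : t * (1 + 2 * ε) ≤ s + α := by
    have hg := G.seg2 (1 + 2 * ε) ⟨by linarith, le_rfl⟩
    have hmap := G.bijOn.mapsTo ⟨by linarith, h2⟩
    rw [hg, ← hT] at hmap
    exact hmap.2
  refine ⟨C / (2 * s * (2 + 2 * ε)), by positivity, C / (2 * s), by positivity,
    fun c δ K hc hcc hδ hδδ hK P Q => ?_⟩
  have hc2 : c * (2 * s * (2 + 2 * ε)) < C := (lt_div_iff₀ (by positivity)).1 hcc
  have hδ2 : δ * (2 * s) < C := (lt_div_iff₀ (by positivity)).1 hδδ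
  have e1 : 0 ≤ c * ε := by positivity
  have e2 : c * ε ≤ c * s * ε := by
    have h := mul_nonneg (mul_nonneg hc.le hε.le) (by linarith : (0:ℝ) ≤ s - 1)
    linarith
  have e3 : c ≤ c * s := by
    have h := mul_nonneg hc.le (by linarith : (0:ℝ) ≤ s - 1); linarith
  have e4 : δ ≤ δ * s := by
    have h := mul_nonneg hδ.le (by linarith : (0:ℝ) ≤ s - 1); linarith
  have e5 : δ * s < C / 2 := by linarith
  have e6 : c * s + c * s * ε < C / 4 := by linarith
  have e7 : 0 ≤ c * s := mul_nonneg hc.le hs0.le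
  have e8 : 0 ≤ c * s * ε := mul_nonneg e7 hε.le
  have e9 : 0 ≤ δ * s := mul_nonneg hδ.le hs0.le
  have g1 : c ≤ t * c := by
    have h := mul_nonneg (by linarith : (0:ℝ) ≤ t - 1) hc.le; linarith
  have g2 : c * ε ≤ t * (c * ε) := by
    have h := mul_nonneg (by linarith : (0:ℝ) ≤ t - 1) e1; linarith
  have f1 : t * δ ≤ s * δ := mul_le_mul_of_nonneg_right hts.le hδ.le
  have f2 : t * c ≤ s * c := mul_le_mul_of_nonneg_right hts.le hc.le
  have f3 : t * (c * ε) ≤ s * (c * ε) := mul_le_mul_of_nonneg_right hts.le e1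
  have f4 : 0 ≤ t * δ := mul_nonneg ht0.le hδ.le
  -- Profile function facts
  have pf1 : P.f 1 = 0 := P.f_one
  have pf1e : P.f (1 - ε) = -δ := by have := P.inc1; linarith
  have hb : c * (1 - ε) + P.b = -δ := by
    have := P.seg1 (1 - ε) ⟨by linarith, le_rfl⟩; linarith
  have hcKv : P.cK = -K := by
    have := P.seg2 1 ⟨le_rfl, by linarith⟩
    rw [pf1] at this; linarith
  have pfe : P.f (1 + ε) = K * ε := by
    have h := P.seg2 (1 + ε) ⟨by linarith, le_rfl⟩
    rw [hcKv] at h; linear_combination h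
  have pf2e : P.f (1 + 2 * ε) = K * ε + δ := by
    have := P.inc2; linarith
  have hB : c * (1 + 2 * ε) + P.B = K * ε + δ := by
    have := P.seg3 (1 + 2 * ε) ⟨le_rfl, h2⟩; linarith
  have pfa : P.f (1 - α) = c * (1 - α) + P.b := P.seg1 _ ⟨le_rfl, by linarith⟩
  have pfsa : P.f (s + α) = c * (s + α) + P.B := P.seg3 _ ⟨h2, le_rfl⟩
  -- Matching function facts
  have q2 := Q.seg2 (s * (1 - ε)) ⟨le_rfl, by nlinarith⟩
  rw [mul_div_cancel_left₀ _ hsne, pf1e] at q2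
  have hbt : c * (s * (1 - ε)) + Q.bt = s * (-δ) := by
    have := Q.seg1 (s * (1 - ε)) ⟨h1, le_rfl⟩; linarith
  have qfa : Q.F (1 - α) = c * (1 - α) + Q.bt := Q.seg1 _ ⟨le_rfl, h1⟩
  have hctK : K * s + Q.ctK = 0 := by
    have := Q.seg3 s ⟨le_rfl, by rw [← hT]; linarith [htmul]⟩
    rw [Q.F_s] at this; linarith
  have hdt : K * (t * (1 + ε)) + Q.ctK = t * (K * ε) + Q.dt := by
    have h4 := Q.seg4 (t * (1 + ε))
      ⟨by rw [← hT], by rw [← hT]; exact mul_le_mul_of_nonneg_left (by linarith) ht0.le⟩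
    rw [← hT, mul_div_cancel_left₀ _ htne, pfe] at h4
    have h3' := Q.seg3 (t * (1 + ε)) ⟨by linarith [htmul], by rw [← hT]⟩
    linarith
  have hBt : c * (t * (1 + 2 * ε)) + Q.Bt = t * (K * ε + δ) + Q.dt := by
    have h4 := Q.seg4 (t * (1 + 2 * ε))
      ⟨by rw [← hT]; exact mul_le_mul_of_nonneg_left (by linarith) ht0.le, by rw [← hT]⟩
    rw [← hT, mul_div_cancel_left₀ _ htne, pf2e] at h4
    have h5 := Q.seg5 (t * (1 + 2 * ε)) ⟨by rw [← hT], h3⟩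
    linarith
  have qsa : Q.F (s + α) = c * (s + α) + Q.Bt := by
    have := Q.seg5 (s + α) ⟨by rw [← hT]; exact h3, le_rfl⟩
    exact this
  -- closed forms for the differences of constants
  have hbtv : Q.bt - P.b = (1 - s) * (δ + c * (1 - ε)) := by
    linear_combination hbt - hb
  have hdtv : Q.dt = K * ε * (1 - t) := by
    linear_combination -hdt + hctK + K * htmul
  have hBtv : Q.Bt - P.B = (t - 1) * (δ - c * (1 + 2 * ε)) := by
    linear_combination hBt - hdt + hctK + K * htmul - hB
  refine ⟨?_, ?_, ?_⟩
  · rw [qfa, pfa, abs_lt]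
    constructor <;> linarith [hbtv]
  · rw [qsa, pfsa, abs_lt]
    constructor <;> linarith [hBtv]
  · rintro r (hr | hr)
    · have hgr : G.g r = s * r := G.seg1 r hr
      have hmem : s * r ∈ Icc (s * (1 - ε)) s := by
        constructor
        · exact mul_le_mul_of_nonneg_left hr.1 hs0.le
        · have := mul_le_mul_of_nonneg_left hr.2 hs0.le; linarith
      have hF := Q.seg2 (s * r) hmem
      rw [mul_div_cancel_left₀ _ hsne] at hF
      have hlo := P.mono1 ⟨le_rfl, by linarith⟩ hr hr.1
      have hhi := P.mono1 hr ⟨by linarith, le_rfl⟩ hr.2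
      rw [pf1e] at hlo; rw [pf1] at hhi
      have m1 := mul_le_mul_of_nonneg_left hlo hs0.le
      have m2 := mul_le_mul_of_nonneg_left hhi hs0.le
      rw [hgr, hF, abs_lt]
      constructor <;> linarith
    · have hgr : G.g r = t * r := by have := G.seg2 r hr; rwa [← hT] at this
      have hF := Q.seg4 (t * r)
        ⟨by rw [← hT]; exact mul_le_mul_of_nonneg_left hr.1 ht0.le,
         by rw [← hT]; exact mul_le_mul_of_nonneg_left hr.2 ht0.le⟩
      rw [← hT, mul_div_cancel_left₀ _ htne, hdtv] at hF
      have hlo := P.mono2 ⟨le_rfl, by linarith⟩ hr hr.1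
      have hhi := P.mono2 hr ⟨by linarith, le_rfl⟩ hr.2
      rw [pfe] at hlo; rw [pf2e] at hhi
      have m1 := mul_le_mul_of_nonneg_left hlo ht0.le
      have m2 := mul_le_mul_of_nonneg_left hhi ht0.le
      rw [hgr, hF, abs_lt]
      constructor <;> linarith
end
end

section
/- Let f be a profile function with parameters c, δ, K and let F be the function matching f. Then F is C^∞ and F'(r) = f'(g^{−1}(r)) for all r ∈ [1−α, s+α]. -/
open Set
noncomputable section

lemma glue_aux (f : ℝ → ℝ) (lo l m m' hi c1 b1 c2 b2 : ℝ)
    (hlo : lo < l) (hlm : l < m) (hmm' : m < m') (hm'hi : m' ≤ hi)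
    (hf : ContDiffOn ℝ (⊤ : ℕ∞) f (Icc lo hi))
    (hleft : ∀ x ∈ Icc lo l, f x = c1 * x + b1)
    (hright : ∀ x ∈ Icc m m', f x = (c1 + c2) * x + (b1 + b2)) :
    ∃ u : ℝ → ℝ, ContDiff ℝ (⊤ : ℕ∞) u ∧
      (∀ x, x ≤ l → u x = 0) ∧
      (∀ x ∈ Icc lo m', u x = f x - (c1 * x + b1)) ∧
      (∀ x, m ≤ x → u x = c2 * x + b2) ∧
      (∀ x, x ≤ l → deriv u x = 0) ∧
      (∀ x, m ≤ x → deriv u x = c2) := by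
  set u : ℝ → ℝ := fun x => if x < l then 0 else if m < x then c2 * x + b2
    else f x - (c1 * x + b1) with hu_def
  have h0 : ∀ x, x ≤ l → u x = 0 := by
    intro x hx
    by_cases hxl : x < l
    · simp [hu_def, hxl]
    · have hxe : x = l := le_antisymm hx (not_lt.1 hxl)
      have : ¬ m < x := by rw [hxe]; exact not_lt.2 hlm.le
      simp only [hu_def, if_neg hxl, if_neg this]
      rw [hleft x ⟨by linarith, hx⟩]; ring
  have hmid : ∀ x ∈ Icc lo m', u x = f x - (c1 * x + b1) := by
    rintro x ⟨hx1, hx2⟩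
    by_cases h1 : x < l
    · rw [h0 x h1.le, hleft x ⟨hx1, h1.le⟩]; ring
    · by_cases h2 : m < x
      · simp only [hu_def, if_neg h1, if_pos h2]
        rw [hright x ⟨h2.le, hx2⟩]; ring
      · simp [hu_def, h1, h2]
  have hlin : ∀ x, m ≤ x → u x = c2 * x + b2 := by
    intro x hx
    have h1 : ¬ x < l := not_lt.2 (by linarith)
    by_cases h2 : m < x
    · simp [hu_def, h1, h2]
    · have hxm : x = m := le_antisymm (not_lt.1 h2) hx
      simp only [hu_def, if_neg h1, if_neg h2]
      rw [hright x ⟨hx, by linarith⟩]; ring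
  have hsmooth : ContDiff ℝ (⊤ : ℕ∞) u := by
    rw [contDiff_iff_contDiffAt]
    intro x
    by_cases hx1 : x < l
    · exact contDiffAt_const.congr_of_eventuallyEq
        (Filter.eventuallyEq_of_mem (Iio_mem_nhds hx1) fun y hy => h0 y (le_of_lt hy))
    · by_cases hx2 : m < x
      · have hcd : ContDiff ℝ (⊤ : ℕ∞) (fun y : ℝ => c2 * y + b2) :=
          (contDiff_const.mul contDiff_id).add contDiff_const
        exact hcd.contDiffAt.congr_of_eventuallyEq
          (Filter.eventuallyEq_of_mem (Ioi_mem_nhds hx2) fun y hy => hlin y (le_of_lt hy))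
      · have hxl : l ≤ x := not_lt.1 hx1
        have hxm : x ≤ m := not_lt.1 hx2
        have hfx : ContDiffAt ℝ (⊤ : ℕ∞) f x :=
          hf.contDiffAt (Icc_mem_nhds (by linarith) (by linarith))
        have hcd : ContDiffAt ℝ (⊤ : ℕ∞) (fun y => f y - (c1 * y + b1)) x :=
          hfx.sub ((contDiffAt_const.mul contDiffAt_id).add contDiffAt_const)
        exact hcd.congr_of_eventuallyEq
          (Filter.eventuallyEq_of_mem
            (Ioo_mem_nhds (show lo < x by linarith) (show x < m' by linarith))
            fun y hy => hmid y ⟨hy.1.le, hy.2.le⟩)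
  have hdiff := hsmooth.differentiable (by simp)
  have hd0 : ∀ x, x ≤ l → deriv u x = 0 := by
    intro x hx
    have h1 : HasDerivWithinAt u (deriv u x) (Iic x) x := (hdiff x).hasDerivAt.hasDerivWithinAt
    have h2 : HasDerivWithinAt (fun _ : ℝ => (0:ℝ)) (deriv u x) (Iic x) x :=
      h1.congr (fun y hy => (h0 y (le_trans hy hx)).symm) (h0 x hx).symm
    have hud : UniqueDiffWithinAt ℝ (Iic x) x := uniqueDiffOn_Iic x x self_mem_Iic
    exact (h2.derivWithin hud).symm.trans
      ((hasDerivWithinAt_const x (Iic x) (0:ℝ)).derivWithin hud)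
  have hdc2 : ∀ x, m ≤ x → deriv u x = c2 := by
    intro x hx
    have h1 : HasDerivWithinAt u (deriv u x) (Ici x) x := (hdiff x).hasDerivAt.hasDerivWithinAt
    have h2 : HasDerivWithinAt (fun y : ℝ => c2 * y + b2) (deriv u x) (Ici x) x :=
      h1.congr (fun y hy => (hlin y (le_trans hx hy)).symm) (hlin x hx).symm
    have h3 : HasDerivAt (fun y : ℝ => c2 * y + b2) c2 x := by
      simpa using ((hasDerivAt_id x).const_mul c2).add_const b2
    have hud : UniqueDiffWithinAt ℝ (Ici x) x := uniqueDiffOn_Ici x x self_mem_Ici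
    exact (h2.derivWithin hud).symm.trans (h3.hasDerivWithinAt.derivWithin hud)
  exact ⟨u, hsmooth, h0, hmid, hlin, hd0, hdc2⟩


set_option maxHeartbeats 1000000 in
/-- STATEMENT 11: the function `F` matching a profile function `f` is `C^∞`, and
`F'(r) = f'(g⁻¹(r))` for all `r ∈ [1−α, s+α]`. -/
theorem statement11 (s α ε c δ K : ℝ) (hs : 1 < s) (hα : 0 < α) (hε : 0 < ε)
    (hεm : ε < min α s) (hc : 0 < c) (hδ : 0 < δ) (hK : 0 < K)
    (G : NeckMap s α ε) (ginv : ℝ → ℝ)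
    (hginv : InvOn ginv G.g (Icc (1 - α) (s + α)) (Icc (1 - α) (s + α)))
    (P : ProfileFun s α ε c δ K) (Q : MatchingFun s α ε c K P.f) :
    ContDiffOn ℝ (⊤ : ℕ∞) Q.F (Icc (1 - α) (s + α)) ∧
    ∀ r ∈ Icc (1 - α) (s + α),
      derivWithin Q.F (Icc (1 - α) (s + α)) r
        = derivWithin P.f (Icc (1 - α) (s + α)) (ginv r) := by
  obtain ⟨hεα, hεs⟩ := lt_min_iff.1 hεm
  have hs0 : (0:ℝ) < s := by linarith
  have h1ε : (0:ℝ) < 1 + ε := by linarith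
  have hst0 : 0 < stilde s ε := div_pos (by linarith) h1ε
  have hstE : stilde s ε * (1 + ε) = s + ε := by
    unfold stilde; field_simp
  have hst1 : 1 < stilde s ε := by nlinarith [hstE]
  have hs' : s ≠ 0 := ne_of_gt hs0
  have hst' : stilde s ε ≠ 0 := ne_of_gt hst0
  have hIlt : (1:ℝ) - α < s + α := by linarith
  have hUD : UniqueDiffOn ℝ (Icc (1-α) (s+α)) := uniqueDiffOn_Icc hIlt
  have hm1ε : (1:ℝ) - ε ∈ Icc (1-α) (s+α) := ⟨by linarith, by linarith⟩
  have hm1 : (1:ℝ) ∈ Icc (1-α) (s+α) := ⟨by linarith, by linarith⟩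
  have hm1pε : (1:ℝ) + ε ∈ Icc (1-α) (s+α) := ⟨by linarith, by linarith⟩
  have h2ε : 1 + 2*ε < s + α := by
    by_contra h
    push_neg at h
    have hg := G.seg2 (s+α) ⟨by linarith, h⟩
    have hmemI : s + α ∈ Icc (1-α) (s+α) := ⟨by linarith, le_rfl⟩
    have h2 := (G.bijOn.mapsTo hmemI).2
    rw [hg] at h2
    nlinarith
  have hm12ε : (1:ℝ) + 2*ε ∈ Icc (1-α) (s+α) := ⟨by linarith, h2ε.le⟩
  have ha4a5 : stilde s ε * (1+2*ε) ≤ s + α := by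
    have hg := G.seg2 (1+2*ε) ⟨by linarith, le_rfl⟩
    have h2 := (G.bijOn.mapsTo hm12ε).2
    rwa [hg] at h2
  have ha0a1 : 1 - α ≤ s*(1-ε) := by
    have hg := G.seg1 (1-ε) ⟨le_rfl, by linarith⟩
    have h2 := (G.bijOn.mapsTo hm1ε).1
    rwa [hg] at h2
  have ha1a2 : s*(1-ε) ≤ s := by nlinarith
  have ha2a3 : s ≤ stilde s ε * (1+ε) := by rw [hstE]; linarith
  have ha3a4 : stilde s ε * (1+ε) ≤ stilde s ε * (1+2*ε) := by nlinarith
  have hg1ε : G.g (1-ε) = s*(1-ε) := G.seg1 _ ⟨le_rfl, by linarith⟩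
  have hg1 : G.g 1 = s := by have h := G.seg1 1 ⟨by linarith, le_rfl⟩; rw [h]; ring
  have hg1pε : G.g (1+ε) = stilde s ε * (1+ε) := G.seg2 _ ⟨le_rfl, by linarith⟩
  have hg12ε : G.g (1+2*ε) = stilde s ε * (1+2*ε) := G.seg2 _ ⟨by linarith, le_rfl⟩
  have hginvI : ∀ r ∈ Icc (1-α) (s+α), ginv r ∈ Icc (1-α) (s+α) := by
    intro r hr
    obtain ⟨x, hx, hgx⟩ := G.bijOn.surjOn hr
    have h := hginv.1 hx
    rw [hgx] at h
    rw [h]; exact hx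
  -- glued functions
  obtain ⟨A, hAs, hA0, hAmid, hAlin, hA'0, hA'lin⟩ :=
    glue_aux P.f (1-α) (1-ε) 1 (1+ε) (s+α) c P.b (K-c) (P.cK - P.b)
      (by linarith) (by linarith) (by linarith) (by linarith)
      P.smooth P.seg1
      (by intro x hx; rw [P.seg2 x hx]; ring)
  obtain ⟨Bf, hBs, hB0, hBmid, hBlin, hB'0, hB'lin⟩ :=
    glue_aux P.f 1 (1+ε) (1+2*ε) (s+α) (s+α) K P.cK (c-K) (P.B - P.cK)
      (by linarith) (by linarith) h2ε le_rfl
      (P.smooth.mono (Icc_subset_Icc (by linarith) le_rfl))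
      P.seg2
      (by intro x hx; rw [P.seg3 x hx]; ring)
  have hAdiff := hAs.differentiable (by simp)
  have hBdiff := hBs.differentiable (by simp)
  -- division helpers
  have hdivs_le : ∀ {r t : ℝ}, r ≤ s * t → r / s ≤ t := by
    intro r t h; rw [div_le_iff₀ hs0]; nlinarith
  have hdivs_ge : ∀ {r t : ℝ}, s * t ≤ r → t ≤ r / s := by
    intro r t h; rw [le_div_iff₀ hs0]; nlinarith
  have hdivst_le : ∀ {r t : ℝ}, r ≤ stilde s ε * t → r / stilde s ε ≤ t := by
    intro r t h; rw [div_le_iff₀ hst0]; nlinarith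
  have hdivst_ge : ∀ {r t : ℝ}, stilde s ε * t ≤ r → t ≤ r / stilde s ε := by
    intro r t h; rw [le_div_iff₀ hst0]; nlinarith
  -- f = Ψ on I
  have hfΨ : EqOn P.f (fun x : ℝ => c*x + P.b + A x + Bf x) (Icc (1-α) (s+α)) := by
    intro x hx
    rcases le_or_gt x 1 with h1 | h1
    · simp only
      rw [hAmid x ⟨hx.1, by linarith⟩, hB0 x (by linarith)]; ring
    · simp only
      rw [hAlin x h1.le, hBmid x ⟨h1.le, hx.2⟩]; ring
  have hΨder : ∀ x : ℝ, HasDerivAt (fun x : ℝ => c*x + P.b + A x + Bf x)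
      (c + deriv A x + deriv Bf x) x := by
    intro x
    have h := ((((hasDerivAt_id x).const_mul c).add_const P.b).add
      (hAdiff x).hasDerivAt).add (hBdiff x).hasDerivAt
    simpa [Pi.add_def] using h
  have hfd : ∀ x ∈ Icc (1-α) (s+α),
      derivWithin P.f (Icc (1-α) (s+α)) x = c + deriv A x + deriv Bf x := by
    intro x hx
    rw [derivWithin_congr hfΨ (hfΨ hx)]
    exact ((hΨder x).hasDerivWithinAt).derivWithin (hUD x hx)
  -- constants of Q
  have hb1ε : P.f (1-ε) = c*(1-ε) + P.b := P.seg1 _ ⟨by linarith, le_rfl⟩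
  have hcK : P.cK = -K := by
    have h := P.seg2 1 ⟨le_rfl, by linarith⟩
    rw [P.f_one] at h; linarith
  have hf1pε : P.f (1+ε) = K*(1+ε) + P.cK := P.seg2 _ ⟨by linarith, le_rfl⟩
  have hf12ε : P.f (1+2*ε) = c*(1+2*ε) + P.B := P.seg3 _ ⟨le_rfl, h2ε.le⟩
  have hbt : Q.bt = s * P.b := by
    have h1 := Q.seg1 _ ⟨ha0a1, le_rfl⟩
    have h2 := Q.seg2 _ ⟨le_rfl, ha1a2⟩
    rw [h1, mul_div_cancel_left₀ _ hs', hb1ε] at h2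
    linear_combination h2
  have hctK : Q.ctK = -(K*s) := by
    have h1 := Q.seg3 s ⟨le_rfl, ha2a3⟩
    rw [Q.F_s] at h1; linarith
  have hdt : Q.dt = (s - stilde s ε) * P.cK := by
    have h1 := Q.seg3 _ ⟨ha2a3, le_rfl⟩
    have h2 := Q.seg4 _ ⟨le_rfl, ha3a4⟩
    rw [h1, mul_div_cancel_left₀ _ hst', hf1pε, hctK] at h2
    linear_combination -h2 - s * hcK
  have hBt : Q.Bt = stilde s ε * P.B + (s - stilde s ε) * P.cK := by
    have h1 := Q.seg4 _ ⟨ha3a4, le_rfl⟩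
    have h2 := Q.seg5 _ ⟨le_rfl, ha4a5⟩
    rw [h2, mul_div_cancel_left₀ _ hst', hf12ε, hdt] at h1
    linear_combination h1
  -- F = Φ on I
  have hFΦ : EqOn Q.F
      (fun r : ℝ => c*r + s*P.b + s * A (r/s) + stilde s ε * Bf (r/stilde s ε))
      (Icc (1-α) (s+α)) := by
    intro r hr
    have hy1 : s * (r/s) = r := by field_simp
    have hy2 : stilde s ε * (r/stilde s ε) = r := by field_simp
    simp only
    rcases le_or_gt r (s*(1-ε)) with h1 | h1
    · rw [Q.seg1 r ⟨hr.1, h1⟩, hA0 _ (hdivs_le h1),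
        hB0 _ (hdivst_le (by rw [hstE]; linarith)), hbt]
      ring
    · rcases le_or_gt r s with h2 | h2
      · have hlo := hdivs_ge h1.le
        have hup : r/s ≤ 1 := hdivs_le (by linarith)
        rw [Q.seg2 r ⟨h1.le, h2⟩, hAmid (r/s) ⟨by linarith, by linarith⟩,
          hB0 _ (hdivst_le (by rw [hstE]; linarith))]
        linear_combination c * hy1
      · rcases le_or_gt r (stilde s ε * (1+ε)) with h3 | h3
        · have hge1 : (1:ℝ) ≤ r/s := hdivs_ge (by linarith)
          rw [Q.seg3 r ⟨h2.le, h3⟩, hAlin _ hge1, hB0 _ (hdivst_le h3), hctK, hcK]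
          linear_combination (c - K) * hy1
        · rcases le_or_gt r (stilde s ε * (1+2*ε)) with h4 | h4
          · have hsr : s ≤ r := by linarith [hstE]
            have hge1 : (1:ℝ) ≤ r/s := hdivs_ge (by linarith)
            have hlo2 := hdivst_ge h3.le
            have hup2 := hdivst_le h4
            rw [Q.seg4 r ⟨h3.le, h4⟩, hAlin _ hge1,
              hBmid _ ⟨by linarith, by linarith⟩, hdt, hcK]
            linear_combination (c - K) * hy1 + K * hy2
          · have hsr : s ≤ r := by linarith [hstE]
            have hge1 : (1:ℝ) ≤ r/s := hdivs_ge (by linarith)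
            have hge2 := hdivst_ge h4.le
            rw [Q.seg5 r ⟨h4.le, hr.2⟩, hAlin _ hge1, hBlin _ hge2, hBt, hcK]
            linear_combination (c - K) * hy1 + (K - c) * hy2
  have hAc : ContDiff ℝ (⊤ : ℕ∞) (fun r : ℝ => A (r/s)) :=
    hAs.comp (contDiff_id.div_const s)
  have hBc : ContDiff ℝ (⊤ : ℕ∞) (fun r : ℝ => Bf (r/stilde s ε)) :=
    hBs.comp (contDiff_id.div_const (stilde s ε))
  have hΦs : ContDiff ℝ (⊤ : ℕ∞)
      (fun r : ℝ => c*r + s*P.b + s * A (r/s) + stilde s ε * Bf (r/stilde s ε)) :=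
    (((contDiff_const.mul contDiff_id).add contDiff_const).add
      (contDiff_const.mul hAc)).add (contDiff_const.mul hBc)
  have hΦder : ∀ r : ℝ,
      HasDerivAt (fun r : ℝ => c*r + s*P.b + s * A (r/s) + stilde s ε * Bf (r/stilde s ε))
        (c + deriv A (r/s) + deriv Bf (r/stilde s ε)) r := by
    intro r
    have hA1 : HasDerivAt (fun y : ℝ => A (y/s)) (deriv A (r/s) * (1/s)) r := by
      have h := HasDerivAt.comp r (hAdiff (r/s)).hasDerivAt ((hasDerivAt_id r).div_const s)
      simpa [Function.comp_def] using h
    have hB1 : HasDerivAt (fun y : ℝ => Bf (y/stilde s ε))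
        (deriv Bf (r/stilde s ε) * (1/stilde s ε)) r := by
      have h := HasDerivAt.comp r (hBdiff (r/stilde s ε)).hasDerivAt
        ((hasDerivAt_id r).div_const (stilde s ε))
      simpa [Function.comp_def] using h
    have h := ((((hasDerivAt_id r).const_mul c).add_const (s*P.b)).add
      (hA1.const_mul s)).add (hB1.const_mul (stilde s ε))
    refine h.congr_deriv ?_
    field_simp
  have hFd : ∀ r ∈ Icc (1-α) (s+α),
      derivWithin Q.F (Icc (1-α) (s+α)) r
        = c + deriv A (r/s) + deriv Bf (r/stilde s ε) := by
    intro r hr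
    rw [derivWithin_congr hFΦ (hFΦ hr)]
    exact ((hΦder r).hasDerivWithinAt).derivWithin (hUD r hr)
  refine ⟨(hΦs.contDiffOn).congr hFΦ, ?_⟩
  intro r hr
  have hy1 : s * (r/s) = r := by field_simp
  have hy2 : stilde s ε * (r/stilde s ε) = r := by field_simp
  have hx'I := hginvI r hr
  have hgx' : G.g (ginv r) = r := hginv.2 hr
  have hle : ∀ a ∈ Icc (1-α) (s+α), r ≤ G.g a → ginv r ≤ a := by
    intro a ha h
    exact (G.strictMono.le_iff_le hx'I ha).1 (by rw [hgx']; exact h)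
  have hge : ∀ a ∈ Icc (1-α) (s+α), G.g a ≤ r → a ≤ ginv r := by
    intro a ha h
    exact (G.strictMono.le_iff_le ha hx'I).1 (by rw [hgx']; exact h)
  rw [hFd r hr, hfd _ hx'I]
  rcases le_or_gt r (s*(1-ε)) with h1 | h1
  · have hx1 : ginv r ≤ 1-ε := hle _ hm1ε (by rw [hg1ε]; exact h1)
    rw [hA'0 _ (hdivs_le h1), hB'0 _ (hdivst_le (by rw [hstE]; linarith)),
      hA'0 _ hx1, hB'0 _ (by linarith)]
  · rcases le_or_gt r s with h2 | h2
    · have hlo := hdivs_ge h1.le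
      have hup : r/s ≤ 1 := hdivs_le (by linarith)
      have hginv_eq : ginv r = r/s := by
        have hgr : G.g (r/s) = r := by rw [G.seg1 _ ⟨hlo, hup⟩, hy1]
        have h := hginv.1 (show r/s ∈ Icc (1-α) (s+α) from ⟨by linarith, by linarith⟩)
        rw [hgr] at h; exact h
      rw [hginv_eq, hB'0 _ (hdivst_le (by rw [hstE]; linarith)), hB'0 _ (by linarith)]
    · rcases le_or_gt r (stilde s ε * (1+ε)) with h3 | h3
      · have hx1 : 1 ≤ ginv r := hge _ hm1 (by rw [hg1]; exact h2.le)
        have hx2 : ginv r ≤ 1+ε := hle _ hm1pε (by rw [hg1pε]; exact h3)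
        rw [hA'lin _ (hdivs_ge (by linarith)), hB'0 _ (hdivst_le h3),
          hA'lin _ hx1, hB'0 _ hx2]
      · rcases le_or_gt r (stilde s ε * (1+2*ε)) with h4 | h4
        · have hsr : s ≤ r := by linarith [hstE]
          have hlo2 := hdivst_ge h3.le
          have hup2 := hdivst_le h4
          have hginv_eq : ginv r = r/stilde s ε := by
            have hgr : G.g (r/stilde s ε) = r := by rw [G.seg2 _ ⟨hlo2, hup2⟩, hy2]
            have h := hginv.1 (show r/stilde s ε ∈ Icc (1-α) (s+α) from
              ⟨by linarith, by linarith⟩)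
            rw [hgr] at h; exact h
          rw [hginv_eq, hA'lin _ (hdivs_ge (by linarith)), hA'lin _ (by linarith)]
        · have hsr : s ≤ r := by linarith [hstE]
          have hx1 : 1+2*ε ≤ ginv r := hge _ hm12ε (by rw [hg12ε]; exact h4.le)
          rw [hA'lin _ (hdivs_ge (by linarith)), hB'lin _ (hdivst_ge h4.le),
            hA'lin _ (by linarith), hB'lin _ hx1]
end
end

section
/- Let R be a commutative ring and I ⊆ R an ideal such that the quotient R/I is flat as an R-module. Let A* be a (ℤ-graded) cochain complex of R-modules whose cohomology vanishes in every degree. Then the subcomplex I·A* (whose degree-n term is the submodule I·A^n, with the restricted differential) also has vanishing cohomology in every degree. -/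
/-!
When `R ⧸ I` is flat, tensoring the inclusion `N ⊆ M` with `R ⧸ I` stays injective, i.e.
`N ⧸ I N → M ⧸ I M` is injective, which says `N ∩ I M = I N` for every submodule `N`.
Taking for `N` the coboundaries `d(Aⁿ⁻¹)`, which by exactness are all cocycles of `Aⁿ`, a cocycle
`x ∈ I Aⁿ` lies in `I · d(Aⁿ⁻¹) = d(I Aⁿ⁻¹)`.
-/

noncomputable section

/-- A `ℤ`-graded cochain complex of `R`-modules. -/
structure Cx (R : Type) [CommRing R] where
  X : ℤ → Type
  [acg : ∀ n, AddCommGroup (X n)]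
  [mod : ∀ n, Module R (X n)]
  d : ∀ n, X n →ₗ[R] X (n + 1)
  dd : ∀ (n : ℤ) (x : X n), d (n + 1) (d n x) = 0

attribute [instance] Cx.acg Cx.mod

variable {R : Type} [CommRing R]

/-- Transport along an equality of degrees. -/
def Cx.cast (A : Cx R) {m n : ℤ} (h : m = n) : A.X m ≃ₗ[R] A.X n := by
  subst h; exact LinearEquiv.refl R (A.X m)

/-- The differential arriving at degree `n`. -/
def Cx.dFrom (A : Cx R) (n : ℤ) : A.X (n - 1) →ₗ[R] A.X n :=
  (A.cast (by omega : n - 1 + 1 = n)).toLinearMap ∘ₗ A.d (n - 1)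

open TensorProduct

namespace Submodule

variable {M N : Type*} [AddCommGroup M] [Module R M] [AddCommGroup N] [Module R N]

lemma quotTensorEquivQuotSMul_comp_lTensor (I : Ideal R) (f : N →ₗ[R] M) :
    (quotTensorEquivQuotSMul M I).toLinearMap ∘ₗ f.lTensor (R ⧸ I) =
      mapQ _ _ f (smul_top_le_comap_smul_top I f) ∘ₗ (quotTensorEquivQuotSMul N I).toLinearMap := by
  refine TensorProduct.ext' fun a x ↦ ?_
  obtain ⟨r, rfl⟩ := Ideal.Quotient.mk_surjective a
  simp

lemma injective_mapQ_smul_top_subtype_of_pure (I : Ideal R) [I.Pure] (P : Submodule R M) :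
    Function.Injective (mapQ _ _ P.subtype (smul_top_le_comap_smul_top I P.subtype)) := by
  have hinj : Function.Injective (P.subtype.lTensor (R ⧸ I)) :=
    Module.Flat.lTensor_preserves_injective_linearMap _ P.injective_subtype
  have h := congrArg DFunLike.coe (quotTensorEquivQuotSMul_comp_lTensor I P.subtype)
  simp only [LinearMap.coe_comp, LinearEquiv.coe_coe] at h
  rw [← EquivLike.injective_comp (quotTensorEquivQuotSMul P I), ← h]
  exact (quotTensorEquivQuotSMul M I).injective.comp hinj

lemma inf_smul_top_eq_smul_of_pure (I : Ideal R) [I.Pure] (P : Submodule R M) :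
    P ⊓ I • ⊤ = I • P := by
  have h := injective_mapQ_smul_top_subtype_of_pure I P
  rw [← LinearMap.ker_eq_bot, ker_mapQ, ← LinearMap.le_ker_iff_map, ker_mkQ,
    ← map_le_map_iff_of_injective P.injective_subtype, map_comap_subtype, map_smul'', map_top,
    range_subtype] at h
  exact le_antisymm h (le_inf smul_le_right (smul_mono_right _ le_top))

end Submodule

/-- STATEMENT 13: let `R` be a commutative ring and `I ⊆ R` an ideal such that `R/I` is flat
as an `R`-module. If `A*` is a `ℤ`-graded cochain complex of `R`-modules whose cohomology
vanishes in every degree (every cocycle is a coboundary), then the subcomplex `I·A*` also has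
vanishing cohomology in every degree: every element of `I·Aⁿ` killed by the differential is
the differential of an element of `I·Aⁿ⁻¹`. -/
theorem statement13 (R : Type) [CommRing R] (I : Ideal R)
    (hflat : Module.Flat R (R ⧸ I)) (A : Cx R)
    (hexact : ∀ (n : ℤ) (x : A.X n), A.d n x = 0 →
      ∃ y : A.X (n - 1), A.dFrom n y = x) :
    ∀ (n : ℤ) (x : A.X n), x ∈ (I • (⊤ : Submodule R (A.X n))) → A.d n x = 0 →
      ∃ y ∈ (I • (⊤ : Submodule R (A.X (n - 1)))), A.dFrom n y = x := by
  have : I.Pure := hflat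
  intro n x hxI hdx
  have hx : x ∈ LinearMap.range (A.dFrom n) ⊓ I • ⊤ := ⟨hexact n x hdx, hxI⟩
  rw [Submodule.inf_smul_top_eq_smul_of_pure, LinearMap.range_eq_map, ← Submodule.map_smul''] at hx
  exact hx
end
end
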